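/- Let S ⊆ ℚ be a finite nonempty set and let r ∈ ℚ with r ∉ {−1, 0, 1}. Consider the alphabet X = S × S. Then the language L over X consisting of all words [(a₀,b₀)(a₁,b₁)⋯(a_{n}, b_{n})] (for n ≥ 0, including the empty word) such that the two component digit strings have equal value in base r — that is, ∑_{i=0}^{n} a_i r^{n−i} = ∑_{i=0}^{n} b_i r^{n−i} — is a regular language (accepted by some finite automaton). -/

import Mathlib

/-- The value of a digit word (most significant digit first) with respect to the base `r`:
`val_r(w_{n-1} ⋯ w_1 w_0) = ∑_{i=0}^{n-1} w_i r^i`, computed by Horner's rule. -/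
def valBase (r : ℚ) (w : List ℚ) : ℚ :=
  w.foldl (fun acc d => acc * r + d) 0

/-!
Replacing each letter `(a, b)` by the digit `a - b`, the language consists of the words of
value zero. The left quotient of such a language by a word `u` depends only on
`q = val_r(u)`: it is `{v | q r^|v| + val_r(v) = 0}`. When it is nonempty, `q` is bounded
(through `u` if `|r| < 1`, through `v` if `|r| > 1`), and `q D` is an integer (an element of
`⊥ : Subring ℚ`) for a common denominator `D` of the digits, because `q D r.den^|u|` and
`q D r.num^|v|` are integers with coprime multipliers. So there are finitely many left
quotients, and the language is regular by Myhill–Nerode.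
-/

lemma mem_bot_of_mul_mem_bot_of_isCoprime {R : Type*} [CommRing R] {q : R} {a b : ℤ}
    (hab : IsCoprime a b) (ha : q * a ∈ (⊥ : Subring R)) (hb : q * b ∈ (⊥ : Subring R)) :
    q ∈ (⊥ : Subring R) := by
  obtain ⟨s, t, hst⟩ := hab
  have hq : q = s * (q * a) + t * (q * b) := by
    have hst' : (s : R) * a + t * b = 1 := by simpa using congrArg (Int.cast : ℤ → R) hst
    linear_combination (-q) * hst'
  rw [hq]
  exact add_mem (mul_mem (intCast_mem _ _) ha) (mul_mem (intCast_mem _ _) hb)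

section ValBase

variable (r : ℚ)

lemma valBase_append_singleton (w : List ℚ) (x : ℚ) :
    valBase r (w ++ [x]) = valBase r w * r + x := by
  simp [valBase, List.foldl_append]

lemma valBase_append (u v : List ℚ) :
    valBase r (u ++ v) = valBase r u * r ^ v.length + valBase r v := by
  induction v using List.reverseRecOn with
  | nil => simp [valBase]
  | append_singleton v x ih =>
    rw [← List.append_assoc, valBase_append_singleton, ih, valBase_append_singleton,
      List.length_append, List.length_singleton, pow_succ]
    ring

lemma valBase_map_sub {α : Type*} (f g : α → ℚ) (w : List α) :
    valBase r (w.map fun x => f x - g x) = valBase r (w.map f) - valBase r (w.map g) := by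
  induction w using List.reverseRecOn with
  | nil => simp [valBase]
  | append_singleton w x ih =>
    simp only [List.map_append, List.map_singleton, valBase_append_singleton, ih]
    ring

lemma abs_valBase_le {M : ℚ} {w : List ℚ} (hw : ∀ x ∈ w, |x| ≤ M) :
    |valBase r w| ≤ M * ∑ i ∈ Finset.range w.length, |r| ^ i := by
  induction w using List.reverseRecOn with
  | nil => simp [valBase]
  | append_singleton w x ih =>
    have hwM := ih fun y hy => hw y (List.mem_append_left _ hy)
    have hxM := hw x (by simp)
    calc |valBase r (w ++ [x])| ≤ |valBase r w| * |r| + |x| := by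
          rw [valBase_append_singleton, ← abs_mul]
          exact abs_add_le _ _
      _ ≤ (M * ∑ i ∈ Finset.range w.length, |r| ^ i) * |r| + M := by gcongr
      _ = M * ∑ i ∈ Finset.range (w ++ [x]).length, |r| ^ i := by
          rw [List.length_append, List.length_singleton, geom_sum_succ]
          ring

lemma abs_valBase_le_of_valBase_append_eq_zero (hr : |r| ≠ 1) {M : ℚ} (hM : 0 ≤ M)
    {u v : List ℚ} (hu : ∀ x ∈ u, |x| ≤ M) (hv : ∀ x ∈ v, |x| ≤ M)
    (h : valBase r (u ++ v) = 0) :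
    |valBase r u| ≤ M / |(|r| - 1)| := by
  rw [le_div_iff₀ (abs_pos.mpr (sub_ne_zero.mpr hr))]
  rcases hr.lt_or_gt with hlt | hgt
  · have hsum := geom_sum_mul (|r|) u.length
    have hprefix := mul_le_mul_of_nonneg_right (abs_valBase_le r hu) (sub_nonneg.mpr hlt.le)
    rw [abs_of_neg (sub_neg.mpr hlt)]
    nlinarith [mul_nonneg hM (pow_nonneg (abs_nonneg r) u.length)]
  · have hsum := geom_sum_mul (|r|) v.length
    have hpow : 0 < |r| ^ v.length := by positivity
    have hsuffix : |valBase r u| * |r| ^ v.length = |valBase r v| := by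
      rw [← abs_pow, ← abs_mul, ← abs_neg (valBase r v)]
      congr 1
      linarith [valBase_append r u v]
    have hv' := mul_le_mul_of_nonneg_right (abs_valBase_le r hv) (sub_nonneg.mpr hgt.le)
    rw [abs_of_pos (sub_pos.mpr hgt)]
    refine le_of_mul_le_mul_right ?_ hpow
    nlinarith

lemma valBase_mul_mul_den_pow_mem_bot {D : ℚ} {w : List ℚ}
    (hw : ∀ x ∈ w, x * D ∈ (⊥ : Subring ℚ)) :
    valBase r w * D * r.den ^ w.length ∈ (⊥ : Subring ℚ) := by
  induction w using List.reverseRecOn with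
  | nil => simp [valBase]
  | append_singleton w x ih =>
    have hexpand : valBase r (w ++ [x]) * D * r.den ^ (w ++ [x]).length =
        valBase r w * D * r.den ^ w.length * (r * r.den) + x * D * r.den ^ (w.length + 1) := by
      rw [valBase_append_singleton, List.length_append, List.length_singleton]
      ring
    rw [hexpand, Rat.mul_den_eq_num]
    exact add_mem (mul_mem (ih fun y hy => hw y (List.mem_append_left _ hy)) (intCast_mem _ _))
      (mul_mem (hw x (by simp)) (pow_mem (natCast_mem _ _) _))

lemma valBase_mul_mem_bot_of_valBase_append_eq_zero {D : ℚ} {u v : List ℚ}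
    (hu : ∀ x ∈ u, x * D ∈ (⊥ : Subring ℚ)) (hv : ∀ x ∈ v, x * D ∈ (⊥ : Subring ℚ))
    (h : valBase r (u ++ v) = 0) :
    valBase r u * D ∈ (⊥ : Subring ℚ) := by
  have hcop : IsCoprime (r.den ^ u.length : ℤ) (r.num ^ v.length) :=
    (r.isCoprime_num_den.symm).pow
  refine mem_bot_of_mul_mem_bot_of_isCoprime hcop ?_ ?_
  · exact_mod_cast valBase_mul_mul_den_pow_mem_bot r hu
  · have hsuffix : valBase r u * D * (r.num : ℚ) ^ v.length =
        -(valBase r v * D * r.den ^ v.length) := by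
      rw [← Rat.mul_den_eq_num, mul_pow]
      linear_combination D * r.den ^ v.length * (valBase_append r u v).symm.trans h
    push_cast
    rw [hsuffix]
    exact neg_mem (valBase_mul_mul_den_pow_mem_bot r hv)

end ValBase

lemma finite_setOf_abs_le_mul_mem_bot (B : ℚ) {D : ℚ} (hD : 0 < D) :
    {q : ℚ | |q| ≤ B ∧ q * D ∈ (⊥ : Subring ℚ)}.Finite := by
  refine ((Set.finite_Icc (-⌈B * D⌉) ⌈B * D⌉).image fun n : ℤ => (n : ℚ) / D).subset ?_
  rintro q ⟨hqB, hqD⟩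
  obtain ⟨n, hn⟩ := Subring.mem_bot.mp hqD
  refine ⟨n, ?_, show (n : ℚ) / D = q by rw [hn, mul_div_cancel_right₀ q hD.ne']⟩
  have hnB : |(n : ℚ)| ≤ B * D := by
    rw [hn, abs_mul, abs_of_pos hD]
    gcongr
  rw [Set.mem_Icc, ← abs_le]
  exact_mod_cast hnB.trans (Int.le_ceil _)

lemma exists_pos_forall_mul_mem_bot {ι : Type*} [Finite ι] (f : ι → ℚ) :
    ∃ D : ℚ, 0 < D ∧ ∀ i, f i * D ∈ (⊥ : Subring ℚ) := by
  cases nonempty_fintype ι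
  refine ⟨∏ i, ((f i).den : ℚ), Finset.prod_pos fun i _ => mod_cast (f i).pos, fun i => ?_⟩
  obtain ⟨c, hc⟩ := Finset.dvd_prod_of_mem (fun i => (f i).den) (Finset.mem_univ i)
  rw [← Nat.cast_prod, hc, Nat.cast_mul, ← mul_assoc, Rat.mul_den_eq_num]
  exact mul_mem (intCast_mem _ _) (natCast_mem _ _)

section ZeroValue

variable {α : Type*} (r : ℚ) (f : α → ℚ)

lemma leftQuotient_setOf_valBase_map_eq_zero (u : List α) :
    Language.leftQuotient ({w | valBase r (w.map f) = 0} : Language α) u =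
      {v | valBase r (u.map f) * r ^ v.length + valBase r (v.map f) = 0} := by
  ext v
  change valBase r ((u ++ v).map f) = 0 ↔ _
  rw [List.map_append, valBase_append, List.length_map]
  exact Iff.rfl

theorem isRegular_setOf_valBase_map_eq_zero [Finite α] (hr : |r| ≠ 1) :
    Language.IsRegular ({w | valBase r (w.map f) = 0} : Language α) := by
  cases nonempty_fintype α
  obtain ⟨D, hD, hfD⟩ := exists_pos_forall_mul_mem_bot f
  set M := ∑ a, |f a|
  have hfM (a : α) : |f a| ≤ M :=
    Finset.single_le_sum (fun a _ => abs_nonneg (f a)) (Finset.mem_univ a)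
  have hM : 0 ≤ M := Finset.sum_nonneg fun a _ => abs_nonneg (f a)
  set quotientOf : ℚ → Language α := fun q => {v | q * r ^ v.length + valBase r (v.map f) = 0}
  refine .of_finite_range_leftQuotient <|
    (((finite_setOf_abs_le_mul_mem_bot (M / |(|r| - 1)|) hD).image quotientOf).insert 0).subset ?_
  rintro _ ⟨u, rfl⟩
  rw [leftQuotient_setOf_valBase_map_eq_zero]
  obtain hempty | ⟨v, hv⟩ := (quotientOf (valBase r (u.map f))).eq_empty_or_nonempty
  · exact Or.inl hempty
  have huv : valBase r (u.map f ++ v.map f) = 0 := by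
    rw [valBase_append, List.length_map]
    exact hv
  refine Or.inr ⟨_, ⟨?_, ?_⟩, rfl⟩
  · exact abs_valBase_le_of_valBase_append_eq_zero r hr hM
      (List.forall_mem_map.mpr fun a _ => hfM a) (List.forall_mem_map.mpr fun a _ => hfM a) huv
  · exact valBase_mul_mem_bot_of_valBase_append_eq_zero r
      (List.forall_mem_map.mpr fun a _ => hfD a) (List.forall_mem_map.mpr fun a _ => hfD a) huv

end ZeroValue

theorem equal_value_language_regular_general (S : Finset ℚ) (r : ℚ)
    (hr : r ≠ -1 ∧ r ≠ 0 ∧ r ≠ 1) :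
    Language.IsRegular
      ({w : List (↥S × ↥S) |
          valBase r (w.map fun x => (x.1 : ℚ)) = valBase r (w.map fun x => (x.2 : ℚ))} :
        Language (↥S × ↥S)) := by
  have habs : |r| ≠ 1 := fun h => ((abs_eq zero_le_one).mp h).elim hr.2.2 hr.1
  refine (congrArg Language.IsRegular ?_).mpr
    (isRegular_setOf_valBase_map_eq_zero r (fun x : ↥S × ↥S => (x.1 : ℚ) - x.2) habs)
  ext w
  simp [valBase_map_sub, sub_eq_zero]

/-- for a finite nonempty set `S ⊆ ℚ` and a base `r ∉ {-1, 0, 1}`, the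
language over the alphabet `S × S` of all words whose two component digit strings have
equal value in base `r` is regular. -/
theorem equal_value_language_regular (S : Finset ℚ) (hS : S.Nonempty) (r : ℚ)
    (hr : r ≠ -1 ∧ r ≠ 0 ∧ r ≠ 1) :
    Language.IsRegular
      ({w : List (↥S × ↥S) |
          valBase r (w.map fun x => (x.1 : ℚ)) = valBase r (w.map fun x => (x.2 : ℚ))} :
        Language (↥S × ↥S)) :=
  equal_value_language_regular_general S r hr
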